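/- arXiv:1602.03454 — 4 statements merged into one kernel-verified Lean document; each statement's English description precedes it below -/
import Mathlib

section
/- Assume (H1), (H2) and (H3). Then for every w ∈ [W_c, W_max] there exists a unique ρ ∈ [R_f', R_f''] such that ρ·v_f(ρ) = ρ·(w − p(ρ)) (equivalently, w = p(ρ) + v_f(ρ)); this value, denoted ρ_f(w), is strictly positive, and the map ρ ↦ ρ·(w − p(ρ)) is strictly decreasing at ρ_f(w), i.e. w − p(ρ_f(w)) − ρ_f(w)·p'(ρ_f(w)) < 0. -/
/-- Under (H1), (H2), (H3), for every `w ∈ [W_c, W_max]` there exists a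
unique `ρ ∈ [R_f', R_f'']` with `ρ·v_f(ρ) = ρ·(w − p(ρ))`; this value `ρ_f(w)` is strictly
positive, and `w − p(ρ_f(w)) − ρ_f(w)·p'(ρ_f(w)) < 0`. -/
theorem two_phase_rho_f_exists_unique
    (Rf' Rf'' : ℝ) (vf vf' vf'' p p' p'' : ℝ → ℝ)
    (hRf'' : 0 < Rf'') (hRf' : 0 < Rf') (hR : Rf' < Rf'')
    -- (H1)
    (hvfd : ∀ ρ ∈ Set.Icc (0:ℝ) Rf'', HasDerivAt vf (vf' ρ) ρ)
    (hvfd2 : ∀ ρ ∈ Set.Icc (0:ℝ) Rf'', HasDerivAt vf' (vf'' ρ) ρ)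
    (hvfc : ContinuousOn vf'' (Set.Icc 0 Rf''))
    (hvfpos : 0 < vf Rf'')
    (h1a : ∀ ρ ∈ Set.Icc (0:ℝ) Rf'', vf' ρ ≤ 0)
    (h1b : ∀ ρ ∈ Set.Icc (0:ℝ) Rf'', 0 < vf ρ + ρ * vf' ρ)
    (h1c : ∀ ρ ∈ Set.Icc (0:ℝ) Rf'', 2 * vf' ρ + ρ * vf'' ρ ≤ 0)
    -- (H2)
    (hpd : ∀ ρ ∈ Set.Ici Rf', HasDerivAt p (p' ρ) ρ)
    (hpd2 : ∀ ρ ∈ Set.Ici Rf', HasDerivAt p' (p'' ρ) ρ)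
    (hpc : ContinuousOn p'' (Set.Ici Rf'))
    (h2a : ∀ ρ ∈ Set.Ici Rf', 0 < p' ρ)
    (h2b : ∀ ρ ∈ Set.Ici Rf', 0 < 2 * p' ρ + ρ * p'' ρ)
    -- (H3)
    (h3a : ∀ ρ ∈ Set.Icc Rf' Rf'', 0 < vf' ρ + p' ρ)
    (h3b : ∀ ρ ∈ Set.Icc Rf' Rf'', vf ρ < ρ * p' ρ) :
    ∀ w ∈ Set.Icc (p Rf' + vf Rf') (p Rf'' + vf Rf''),
      ∃ ρf ∈ Set.Icc Rf' Rf'',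
        ρf * vf ρf = ρf * (w - p ρf) ∧
        0 < ρf ∧
        w - p ρf - ρf * p' ρf < 0 ∧
        ∀ ρ ∈ Set.Icc Rf' Rf'', ρ * vf ρ = ρ * (w - p ρ) → ρ = ρf := by

  intro w hw
  set F : ℝ → ℝ := fun ρ => p ρ + vf ρ with hF
  have hsub : ∀ ρ ∈ Set.Icc Rf' Rf'', ρ ∈ Set.Icc (0:ℝ) Rf'' ∧ ρ ∈ Set.Ici Rf' := by
    intro ρ hρ
    exact ⟨⟨le_of_lt (lt_of_lt_of_le hRf' hρ.1), hρ.2⟩, hρ.1⟩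
  have hFd : ∀ ρ ∈ Set.Icc Rf' Rf'', HasDerivAt F (p' ρ + vf' ρ) ρ := by
    intro ρ hρ
    exact (hpd ρ (hsub ρ hρ).2).add (hvfd ρ (hsub ρ hρ).1)
  have hFc : ContinuousOn F (Set.Icc Rf' Rf'') := fun ρ hρ =>
    ((hFd ρ hρ).continuousAt).continuousWithinAt
  have hmono : StrictMonoOn F (Set.Icc Rf' Rf'') := by
    apply strictMonoOn_of_hasDerivWithinAt_pos (convex_Icc _ _) hFc
      (fun ρ hρ => ((hFd ρ (Set.mem_Icc_of_Ioo (by rwa [interior_Icc] at hρ))).hasDerivWithinAt))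
    intro ρ hρ
    rw [interior_Icc] at hρ
    have hρ' : ρ ∈ Set.Icc Rf' Rf'' := Set.mem_Icc_of_Ioo hρ
    have := h3a ρ hρ'
    linarith
  have hwmem : w ∈ Set.Icc (F Rf') (F Rf'') := hw
  have := intermediate_value_Icc (le_of_lt hR) hFc hwmem
  obtain ⟨ρf, hρf, hFρf⟩ := this
  have hρfpos : 0 < ρf := lt_of_lt_of_le hRf' hρf.1
  refine ⟨ρf, hρf, ?_, hρfpos, ?_, ?_⟩
  · have : vf ρf = w - p ρf := by simp only [hF] at hFρf; linarith
    rw [this]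
  · have h3 := h3b ρf hρf
    have : vf ρf = w - p ρf := by simp only [hF] at hFρf; linarith
    linarith
  · intro ρ hρ heq
    have hρpos : 0 < ρ := lt_of_lt_of_le hRf' hρ.1
    have : vf ρ = w - p ρ := by
      have := mul_left_cancel₀ (ne_of_gt hρpos) heq
      exact this
    have hFρ : F ρ = w := by simp only [hF]; linarith
    exact hmono.injOn hρ hρf (hFρ.trans hFρf.symm)
end

section
/- Let v_max > 0, R > 0, v_ref > 0, ρ_max > 0, γ > 0 and 0 < R_f' < R_f''. Define v_f(ρ) := v_max·(1 − ρ/R) and p(ρ) := (v_ref/γ)·(ρ/ρ_max)^γ. Then hypothesis (H3), namely v_f'(ρ) + p'(ρ) > 0 and v_f(ρ) < ρ·p'(ρ) for every ρ ∈ [R_f', R_f''], holds if and only if v_ref/v_max > max{ (1 − R_f'/R)·(ρ_max/R_f')^γ , (R_f'/R)·(ρ_max/R_f')^γ , (R_f''/R)·(ρ_max/R_f'')^γ }. -/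
/-- For `v_f(ρ) = v_max(1 − ρ/R)` and `p(ρ) = (v_ref/γ)(ρ/ρ_max)^γ`
with `γ > 0`, hypothesis (H3) on `[R_f', R_f'']` holds iff
`v_ref/v_max > max{(1 − R_f'/R)(ρ_max/R_f')^γ, (R_f'/R)(ρ_max/R_f')^γ, (R_f''/R)(ρ_max/R_f'')^γ}`. -/
theorem greenshields_arz_H3_iff
    (vmax R vref ρmax γ Rf' Rf'' : ℝ)
    (hvmax : 0 < vmax) (hR : 0 < R) (hvref : 0 < vref) (hρmax : 0 < ρmax) (hγ : 0 < γ)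
    (hRf' : 0 < Rf') (hRR : Rf' < Rf'')
    (vf p : ℝ → ℝ)
    (hvf : vf = fun ρ => vmax * (1 - ρ / R))
    (hp : p = fun ρ => (vref / γ) * (ρ / ρmax) ^ γ) :
    ((∀ ρ ∈ Set.Icc Rf' Rf'', 0 < deriv vf ρ + deriv p ρ) ∧
     (∀ ρ ∈ Set.Icc Rf' Rf'', vf ρ < ρ * deriv p ρ)) ↔
    vref / vmax >
      max ((1 - Rf' / R) * (ρmax / Rf') ^ γ)
        (max ((Rf' / R) * (ρmax / Rf') ^ γ) ((Rf'' / R) * (ρmax / Rf'') ^ γ)) := by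
  subst hvf hp
  have hRf'' : 0 < Rf'' := hRf'.trans hRR
  -- derivative of vf
  have hdvf : ∀ ρ : ℝ, deriv (fun ρ => vmax * (1 - ρ / R)) ρ = -(vmax / R) := by
    intro ρ
    have h : HasDerivAt (fun ρ : ℝ => vmax * (1 - ρ / R)) (vmax * -(1 / R)) ρ := by
      simpa using (((hasDerivAt_id ρ).div_const R).const_sub 1).const_mul vmax
    rw [h.deriv]; ring
  -- derivative of p
  have hdp : ∀ ρ : ℝ, 0 < ρ →
      deriv (fun ρ => (vref / γ) * (ρ / ρmax) ^ γ) ρ = vref * (ρ / ρmax) ^ γ / ρ := by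
    intro ρ hρ
    have h1 : HasDerivAt (fun x : ℝ => x / ρmax) (1 / ρmax) ρ := (hasDerivAt_id ρ).div_const ρmax
    have h2 := h1.rpow_const (p := γ) (Or.inl (by positivity))
    have h3 := h2.const_mul (vref / γ)
    rw [h3.deriv]
    have e : (ρ / ρmax) ^ (γ - 1) = (ρ / ρmax) ^ γ / (ρ / ρmax) := by
      rw [Real.rpow_sub (by positivity), Real.rpow_one]
    rw [e]
    have hγ' : γ ≠ 0 := ne_of_gt hγ
    field_simp
  -- basic rpow facts
  have hApos : ∀ ρ : ℝ, 0 < ρ → (0 : ℝ) < (ρ / ρmax) ^ γ := fun ρ hρ =>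
    Real.rpow_pos_of_pos (by positivity) γ
  have hBpos : ∀ ρ : ℝ, 0 < ρ → (0 : ℝ) < (ρmax / ρ) ^ γ := fun ρ hρ =>
    Real.rpow_pos_of_pos (by positivity) γ
  have hAB : ∀ ρ : ℝ, 0 < ρ → (ρ / ρmax) ^ γ * (ρmax / ρ) ^ γ = 1 := by
    intro ρ hρ
    rw [← Real.mul_rpow (by positivity) (by positivity),
      show ρ / ρmax * (ρmax / ρ) = 1 by field_simp, Real.one_rpow]
  -- key pointwise equivalences
  have key1 : ∀ ρ : ℝ, 0 < ρ →
      ((0 < -(vmax / R) + vref * (ρ / ρmax) ^ γ / ρ) ↔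
        (ρ / R) * (ρmax / ρ) ^ γ < vref / vmax) := by
    intro ρ hρ
    have hA := hApos ρ hρ
    have hB := hBpos ρ hρ
    have hab := hAB ρ hρ
    have h1 : (0 < -(vmax / R) + vref * (ρ / ρmax) ^ γ / ρ) ↔
        vmax / R < vref * (ρ / ρmax) ^ γ / ρ := by constructor <;> intro <;> linarith
    rw [h1, div_lt_div_iff₀ hR hρ, lt_div_iff₀ hvmax, div_mul_eq_mul_div, div_mul_eq_mul_div,
      div_lt_iff₀ hR]
    have comm : ∀ c : ℝ, c * ((ρ / ρmax) ^ γ * (ρmax / ρ) ^ γ) = c := fun c => by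
      rw [hab, mul_one]
    constructor <;> intro h
    · have h2 := mul_lt_mul_of_pos_right h hB
      linarith [h2, comm (vref * R)]
    · have h2 := mul_lt_mul_of_pos_right h hA
      linarith [h2, comm (ρ * vmax)]
  have key2 : ∀ ρ : ℝ, 0 < ρ →
      ((vmax * (1 - ρ / R) < vref * (ρ / ρmax) ^ γ) ↔
        (1 - ρ / R) * (ρmax / ρ) ^ γ < vref / vmax) := by
    intro ρ hρ
    have hA := hApos ρ hρ
    have hB := hBpos ρ hρ
    have hab := hAB ρ hρ
    have comm : ∀ c : ℝ, c * ((ρ / ρmax) ^ γ * (ρmax / ρ) ^ γ) = c := fun c => by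
      rw [hab, mul_one]
    rw [lt_div_iff₀ hvmax]
    constructor <;> intro h
    · have h2 := mul_lt_mul_of_pos_right h hB
      linarith [h2, comm vref]
    · have h2 := mul_lt_mul_of_pos_right h hA
      linarith [h2, comm (vmax * (1 - ρ / R))]
  constructor
  · rintro ⟨h1, h2⟩
    have mem1 : Rf' ∈ Set.Icc Rf' Rf'' := ⟨le_refl _, hRR.le⟩
    have mem2 : Rf'' ∈ Set.Icc Rf' Rf'' := ⟨hRR.le, le_refl _⟩
    have c1 := h1 Rf' mem1
    have c2 := h1 Rf'' mem2
    have c3 := h2 Rf' mem1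
    rw [hdvf, hdp Rf' hRf'] at c1
    rw [hdvf, hdp Rf'' hRf''] at c2
    rw [hdp Rf' hRf'] at c3
    have c3' : vmax * (1 - Rf' / R) < vref * (Rf' / ρmax) ^ γ := by
      have : Rf' * (vref * (Rf' / ρmax) ^ γ / Rf') = vref * (Rf' / ρmax) ^ γ := by
        field_simp
      rw [this] at c3; exact c3
    refine max_lt ((key2 Rf' hRf').mp c3') (max_lt ((key1 Rf' hRf').mp c1)
      ((key1 Rf'' hRf'').mp c2))
  · intro hM
    have hb : (Rf' / R) * (ρmax / Rf') ^ γ < vref / vmax :=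
      lt_of_le_of_lt (le_max_of_le_right (le_max_left _ _)) hM
    have hc : (Rf'' / R) * (ρmax / Rf'') ^ γ < vref / vmax :=
      lt_of_le_of_lt (le_max_of_le_right (le_max_right _ _)) hM
    have ha : (1 - Rf' / R) * (ρmax / Rf') ^ γ < vref / vmax :=
      lt_of_le_of_lt (le_max_left _ _) hM
    have hMpos : 0 < vref / vmax := lt_trans (by positivity) hb
    -- representation of g1
    have repr : ∀ x : ℝ, 0 < x → (x / R) * (ρmax / x) ^ γ = (ρmax ^ γ / R) * x ^ (1 - γ) := by
      intro x hx
      rw [Real.div_rpow hρmax.le hx.le, show (1 : ℝ) - γ = 1 - γ from rfl,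
        Real.rpow_sub hx, Real.rpow_one]
      have hxγ : (0 : ℝ) < x ^ γ := Real.rpow_pos_of_pos hx γ
      field_simp
    have g1bound : ∀ ρ : ℝ, Rf' ≤ ρ → ρ ≤ Rf'' → (ρ / R) * (ρmax / ρ) ^ γ < vref / vmax := by
      intro ρ hρ1 hρ2
      have hρ : 0 < ρ := lt_of_lt_of_le hRf' hρ1
      have hcst : (0 : ℝ) < ρmax ^ γ / R := by positivity
      rcases le_or_gt γ 1 with hle | hlt
      · have : ρ ^ (1 - γ) ≤ Rf'' ^ (1 - γ) :=
          Real.rpow_le_rpow hρ.le hρ2 (by linarith)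
        calc (ρ / R) * (ρmax / ρ) ^ γ = (ρmax ^ γ / R) * ρ ^ (1 - γ) := repr ρ hρ
          _ ≤ (ρmax ^ γ / R) * Rf'' ^ (1 - γ) := by
              exact mul_le_mul_of_nonneg_left this hcst.le
          _ = (Rf'' / R) * (ρmax / Rf'') ^ γ := (repr Rf'' hRf'').symm
          _ < vref / vmax := hc
      · have : ρ ^ (1 - γ) ≤ Rf' ^ (1 - γ) :=
          Real.rpow_le_rpow_of_nonpos hRf' hρ1 (by linarith)
        calc (ρ / R) * (ρmax / ρ) ^ γ = (ρmax ^ γ / R) * ρ ^ (1 - γ) := repr ρ hρ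
          _ ≤ (ρmax ^ γ / R) * Rf' ^ (1 - γ) := by
              exact mul_le_mul_of_nonneg_left this hcst.le
          _ = (Rf' / R) * (ρmax / Rf') ^ γ := (repr Rf' hRf').symm
          _ < vref / vmax := hb
    have g2bound : ∀ ρ : ℝ, Rf' ≤ ρ → ρ ≤ Rf'' →
        (1 - ρ / R) * (ρmax / ρ) ^ γ < vref / vmax := by
      intro ρ hρ1 hρ2
      have hρ : 0 < ρ := lt_of_lt_of_le hRf' hρ1
      rcases le_or_gt (1 - ρ / R) 0 with hneg | hpos
      · calc (1 - ρ / R) * (ρmax / ρ) ^ γ ≤ 0 :=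
              mul_nonpos_of_nonpos_of_nonneg hneg (hBpos ρ hρ).le
          _ < vref / vmax := hMpos
      · have h1 : 1 - ρ / R ≤ 1 - Rf' / R := by
          have : Rf' / R ≤ ρ / R := by gcongr
          linarith
        have h2 : (ρmax / ρ) ^ γ ≤ (ρmax / Rf') ^ γ := by
          apply Real.rpow_le_rpow (by positivity) _ hγ.le
          gcongr
        calc (1 - ρ / R) * (ρmax / ρ) ^ γ ≤ (1 - Rf' / R) * (ρmax / Rf') ^ γ :=
              mul_le_mul h1 h2 (hBpos ρ hρ).le (by linarith)
          _ < vref / vmax := ha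
    constructor <;> intro ρ hρmem
    · obtain ⟨hρ1, hρ2⟩ := hρmem
      have hρ : 0 < ρ := lt_of_lt_of_le hRf' hρ1
      rw [hdvf, hdp ρ hρ]
      exact (key1 ρ hρ).mpr (g1bound ρ hρ1 hρ2)
    · obtain ⟨hρ1, hρ2⟩ := hρmem
      have hρ : 0 < ρ := lt_of_lt_of_le hRf' hρ1
      rw [hdp ρ hρ]
      have h := (key2 ρ hρ).mpr (g2bound ρ hρ1 hρ2)
      have e : ρ * (vref * (ρ / ρmax) ^ γ / ρ) = vref * (ρ / ρmax) ^ γ := by field_simp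
      rw [e]; exact h
end

section
/- Assume (H1), (H2), (H3), fix V_c ∈ (0, V_f), and assume there exists R_max ≥ R_f' with p(R_max) = W_max. Define Ω_f' := {(ρ, v_f(ρ)) : ρ ∈ [0, R_f')}, Ω_f'' := {(ρ, v_f(ρ)) : ρ ∈ [R_f', R_f'']}, Ω_f := Ω_f' ∪ Ω_f'', Ω_c := {(ρ, v) ∈ [R_f', R_max] × [0, V_c] : W_c ≤ v + p(ρ) ≤ W_max}, and W(ρ, v) := v + p(ρ) for (ρ, v) ∈ Ω_c, W(ρ, v) := v_f(ρ) + p(ρ) for (ρ, v) ∈ Ω_f'', W(ρ, v) := W_c for (ρ, v) ∈ Ω_f'. Define 𝓖₁ := {(u₋, u₊) ∈ Ω_f' × Ω_c : ρ₋·(W(u₊) − W_c) = 0}, 𝓖₂ := {(u₋, u₊) ∈ Ω_f'' × Ω_c : W(u₋) = W(u₊)}, and 𝓖ᵢᵀ := {(u₋, u₊) : (u₊, u₋) ∈ 𝓖ᵢ}, and 𝓖_w := 𝓖₁ ∪ 𝓖₂ ∪ 𝓖₁ᵀ ∪ 𝓖₂ᵀ. Then for every pair (u₋, u₊) ∈ (Ω_f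 × Ω_c) ∪ (Ω_c × Ω_f), one has (u₋, u₊) ∈ 𝓖_w if and only if ρ₋·ρ₊·(W(u₋) − W(u₊)) = 0, where ρ₋ and ρ₊ denote the first components of u₋ and u₊. -/
/-- The free phase with densities below `R_f'`: `Ω_f' = {(ρ, v_f(ρ)) : ρ ∈ [0, R_f')}`. -/
def OmegaFlow (Rf' : ℝ) (vf : ℝ → ℝ) : Set (ℝ × ℝ) :=
  {u | ∃ ρ, 0 ≤ ρ ∧ ρ < Rf' ∧ u = (ρ, vf ρ)}

/-- The free phase with densities in `[R_f', R_f'']`: `Ω_f'' = {(ρ, v_f(ρ)) : ρ ∈ [R_f', R_f'']}`. -/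
def OmegaFhigh (Rf' Rf'' : ℝ) (vf : ℝ → ℝ) : Set (ℝ × ℝ) :=
  {u | ∃ ρ, Rf' ≤ ρ ∧ ρ ≤ Rf'' ∧ u = (ρ, vf ρ)}

/-- The free-phase domain `Ω_f = Ω_f' ∪ Ω_f''`. -/
def OmegaF (Rf' Rf'' : ℝ) (vf : ℝ → ℝ) : Set (ℝ × ℝ) :=
  OmegaFlow Rf' vf ∪ OmegaFhigh Rf' Rf'' vf

/-- The congested-phase domain
`Ω_c = {(ρ,v) ∈ [R_f', R_max] × [0, V_c] : W_c ≤ v + p(ρ) ≤ W_max}`. -/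
def OmegaC (Rf' Rmax Vc Wc Wmax : ℝ) (p : ℝ → ℝ) : Set (ℝ × ℝ) :=
  {u | u.1 ∈ Set.Icc Rf' Rmax ∧ u.2 ∈ Set.Icc 0 Vc ∧
       Wc ≤ u.2 + p u.1 ∧ u.2 + p u.1 ≤ Wmax}

/-- `𝓖₁ = {(u₋,u₊) ∈ Ω_f' × Ω_c : ρ₋·(W(u₊) − W_c) = 0}`. -/
def G1 (Rf' Rmax Vc Wc Wmax : ℝ) (vf p : ℝ → ℝ) (W : ℝ × ℝ → ℝ) :
    Set ((ℝ × ℝ) × (ℝ × ℝ)) :=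
  {q | q.1 ∈ OmegaFlow Rf' vf ∧ q.2 ∈ OmegaC Rf' Rmax Vc Wc Wmax p ∧
       q.1.1 * (W q.2 - Wc) = 0}

/-- `𝓖₂ = {(u₋,u₊) ∈ Ω_f'' × Ω_c : W(u₋) = W(u₊)}`. -/
def G2 (Rf' Rf'' Rmax Vc Wc Wmax : ℝ) (vf p : ℝ → ℝ) (W : ℝ × ℝ → ℝ) :
    Set ((ℝ × ℝ) × (ℝ × ℝ)) :=
  {q | q.1 ∈ OmegaFhigh Rf' Rf'' vf ∧ q.2 ∈ OmegaC Rf' Rmax Vc Wc Wmax p ∧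
       W q.1 = W q.2}

/-- `𝓖_w = 𝓖₁ ∪ 𝓖₂ ∪ 𝓖₁ᵀ ∪ 𝓖₂ᵀ`. -/
def Gw (Rf' Rf'' Rmax Vc Wc Wmax : ℝ) (vf p : ℝ → ℝ) (W : ℝ × ℝ → ℝ) :
    Set ((ℝ × ℝ) × (ℝ × ℝ)) :=
  G1 Rf' Rmax Vc Wc Wmax vf p W ∪ G2 Rf' Rf'' Rmax Vc Wc Wmax vf p W ∪
  {q | (q.2, q.1) ∈ G1 Rf' Rmax Vc Wc Wmax vf p W} ∪
  {q | (q.2, q.1) ∈ G2 Rf' Rf'' Rmax Vc Wc Wmax vf p W}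

/-- Under (H1)–(H3), with `V_c ∈ (0, V_f)` and `p(R_max) = W_max`,
for every pair `(u₋, u₊) ∈ (Ω_f × Ω_c) ∪ (Ω_c × Ω_f)` one has
`(u₋, u₊) ∈ 𝓖_w ↔ ρ₋·ρ₊·(W(u₋) − W(u₊)) = 0`, where `W` is the extended Lagrangian
marker (`W = v + p(ρ)` on `Ω_c`, `W = v_f(ρ) + p(ρ)` on `Ω_f''`, `W = W_c` on `Ω_f'`). -/
theorem Gw_characterization
    (Rf' Rf'' Rmax Vc : ℝ) (vf vf' vf'' p p' p'' : ℝ → ℝ) (W : ℝ × ℝ → ℝ)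
    (hRf'' : 0 < Rf'') (hRf' : 0 < Rf') (hR : Rf' < Rf'')
    -- (H1)
    (hvfd : ∀ ρ ∈ Set.Icc (0:ℝ) Rf'', HasDerivAt vf (vf' ρ) ρ)
    (hvfd2 : ∀ ρ ∈ Set.Icc (0:ℝ) Rf'', HasDerivAt vf' (vf'' ρ) ρ)
    (hvfc : ContinuousOn vf'' (Set.Icc 0 Rf''))
    (hvfpos : 0 < vf Rf'')
    (h1a : ∀ ρ ∈ Set.Icc (0:ℝ) Rf'', vf' ρ ≤ 0)
    (h1b : ∀ ρ ∈ Set.Icc (0:ℝ) Rf'', 0 < vf ρ + ρ * vf' ρ)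
    (h1c : ∀ ρ ∈ Set.Icc (0:ℝ) Rf'', 2 * vf' ρ + ρ * vf'' ρ ≤ 0)
    -- (H2)
    (hpd : ∀ ρ ∈ Set.Ici Rf', HasDerivAt p (p' ρ) ρ)
    (hpd2 : ∀ ρ ∈ Set.Ici Rf', HasDerivAt p' (p'' ρ) ρ)
    (hpc : ContinuousOn p'' (Set.Ici Rf'))
    (h2a : ∀ ρ ∈ Set.Ici Rf', 0 < p' ρ)
    (h2b : ∀ ρ ∈ Set.Ici Rf', 0 < 2 * p' ρ + ρ * p'' ρ)
    -- (H3)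
    (h3a : ∀ ρ ∈ Set.Icc Rf' Rf'', 0 < vf' ρ + p' ρ)
    (h3b : ∀ ρ ∈ Set.Icc Rf' Rf'', vf ρ < ρ * p' ρ)
    -- `V_c ∈ (0, V_f)` and `R_max`
    (hVc : 0 < Vc) (hVcf : Vc < vf Rf'')
    (hRmax : Rf' ≤ Rmax) (hpRmax : p Rmax = p Rf'' + vf Rf'')
    -- the extended Lagrangian marker `W`
    (hWc : ∀ u ∈ OmegaC Rf' Rmax Vc (p Rf' + vf Rf') (p Rf'' + vf Rf'') p,
      W u = u.2 + p u.1)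
    (hWf'' : ∀ ρ, Rf' ≤ ρ → ρ ≤ Rf'' → W (ρ, vf ρ) = vf ρ + p ρ)
    (hWf' : ∀ ρ, 0 ≤ ρ → ρ < Rf' → W (ρ, vf ρ) = p Rf' + vf Rf') :
    ∀ um up : ℝ × ℝ,
      (um ∈ OmegaF Rf' Rf'' vf ∧
         up ∈ OmegaC Rf' Rmax Vc (p Rf' + vf Rf') (p Rf'' + vf Rf'') p) ∨
      (um ∈ OmegaC Rf' Rmax Vc (p Rf' + vf Rf') (p Rf'' + vf Rf'') p ∧
         up ∈ OmegaF Rf' Rf'' vf) →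
      ((um, up) ∈ Gw Rf' Rf'' Rmax Vc (p Rf' + vf Rf') (p Rf'' + vf Rf'') vf p W ↔
        um.1 * up.1 * (W um - W up) = 0) := by
  intro um up hcase
  -- `vf` is antitone on `[0, Rf'']`
  have hvfcont : ContinuousOn vf (Set.Icc 0 Rf'') :=
    fun ρ hρ => ((hvfd ρ hρ).continuousAt).continuousWithinAt
  have hanti : AntitoneOn vf (Set.Icc 0 Rf'') := by
    apply antitoneOn_of_deriv_nonpos (convex_Icc 0 Rf'') hvfcont
    · intro x hx
      rw [interior_Icc] at hx
      exact ((hvfd x ⟨hx.1.le, hx.2.le⟩)).differentiableAt.differentiableWithinAt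
    · intro x hx
      rw [interior_Icc] at hx
      rw [(hvfd x ⟨hx.1.le, hx.2.le⟩).deriv]
      exact h1a x ⟨hx.1.le, hx.2.le⟩
  have keyVc : ∀ ρ, Rf' ≤ ρ → ρ ≤ Rf'' → Vc < vf ρ := by
    intro ρ hρ1 hρ2
    have h := hanti (Set.mem_Icc.mpr ⟨by linarith, hρ2⟩)
      (Set.mem_Icc.mpr ⟨by linarith, le_refl _⟩) hρ2
    linarith
  have hdisj : ∀ u ∈ OmegaFhigh Rf' Rf'' vf,
      u ∉ OmegaC Rf' Rmax Vc (p Rf' + vf Rf') (p Rf'' + vf Rf'') p := by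
    rintro u ⟨ρ, h1, h2, rfl⟩ ⟨_, hv, _, _⟩
    exact absurd hv.2 (not_le.mpr (keyVc ρ h1 h2))
  have hdisj' : ∀ u ∈ OmegaFlow Rf' vf,
      u ∉ OmegaC Rf' Rmax Vc (p Rf' + vf Rf') (p Rf'' + vf Rf'') p := by
    rintro u ⟨ρ, h0, h1, rfl⟩ ⟨hl, _⟩
    exact absurd hl.1 (not_le.mpr h1)
  rcases hcase with ⟨hum, hup⟩ | ⟨hum, hup⟩
  · -- um free, up congested
    have hupρ : 0 < up.1 := lt_of_lt_of_le hRf' hup.1.1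
    rcases hum with ⟨ρ, hρ0, hρ1, rfl⟩ | ⟨ρ, hρ1, hρ2, rfl⟩
    · -- um ∈ Ω_f'
      have hWum : W (ρ, vf ρ) = p Rf' + vf Rf' := hWf' ρ hρ0 hρ1
      constructor
      · intro h
        rcases h with ((h | h) | h) | h
        · have := h.2.2
          simp only at this
          simp only [hWum]
          linear_combination (-up.1) * this
        · obtain ⟨ρ', hρ'1, _, heq⟩ := h.1
          have : ρ = ρ' := (Prod.ext_iff.mp heq).1
          linarith
        · exact (hdisj' up h.1 hup).elim
        · exact (hdisj up h.1 hup).elim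
      · intro h
        left; left; left
        refine ⟨⟨ρ, hρ0, hρ1, rfl⟩, hup, ?_⟩
        simp only
        rcases mul_eq_zero.mp h with h' | h'
        · rcases mul_eq_zero.mp h' with h'' | h''
          · have hz : ρ = 0 := h''
            rw [hz]; ring
          · exact absurd h'' (ne_of_gt hupρ)
        · rw [hWum] at h'
          have : W up - (p Rf' + vf Rf') = 0 := by linarith
          rw [this]; ring
    · -- um ∈ Ω_f''
      have hρpos : 0 < ρ := lt_of_lt_of_le hRf' hρ1
      constructor
      · intro h
        rcases h with ((h | h) | h) | h
        · obtain ⟨ρ', _, hρ'1, heq⟩ := h.1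
          have : ρ = ρ' := (Prod.ext_iff.mp heq).1
          linarith
        · rw [h.2.2]; ring
        · exact (hdisj' up h.1 hup).elim
        · exact (hdisj up h.1 hup).elim
      · intro h
        left; left; right
        refine ⟨⟨ρ, hρ1, hρ2, rfl⟩, hup, ?_⟩
        rcases mul_eq_zero.mp h with h' | h'
        · rcases mul_eq_zero.mp h' with h'' | h''
          · exact absurd h'' (ne_of_gt hρpos)
          · exact absurd h'' (ne_of_gt hupρ)
        · linarith [h']
  · -- um congested, up free
    have humρ : 0 < um.1 := lt_of_lt_of_le hRf' hum.1.1
    rcases hup with ⟨ρ, hρ0, hρ1, rfl⟩ | ⟨ρ, hρ1, hρ2, rfl⟩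
    · -- up ∈ Ω_f'
      have hWup : W (ρ, vf ρ) = p Rf' + vf Rf' := hWf' ρ hρ0 hρ1
      constructor
      · intro h
        rcases h with ((h | h) | h) | h
        · exact (hdisj' um h.1 hum).elim
        · exact (hdisj um h.1 hum).elim
        · have := h.2.2
          simp only at this
          simp only [hWup]
          linear_combination um.1 * this
        · obtain ⟨ρ', hρ'1, _, heq⟩ := h.1
          have : ρ = ρ' := (Prod.ext_iff.mp heq).1
          linarith
      · intro h
        left; right
        refine ⟨⟨ρ, hρ0, hρ1, rfl⟩, hum, ?_⟩
        simp only
        rcases mul_eq_zero.mp h with h' | h'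
        · rcases mul_eq_zero.mp h' with h'' | h''
          · exact absurd h'' (ne_of_gt humρ)
          · have hz : ρ = 0 := h''
            rw [hz]; ring
        · rw [hWup] at h'
          have : W um - (p Rf' + vf Rf') = 0 := by linarith
          rw [this]; ring
    · -- up ∈ Ω_f''
      have hρpos : 0 < ρ := lt_of_lt_of_le hRf' hρ1
      constructor
      · intro h
        rcases h with ((h | h) | h) | h
        · exact (hdisj' um h.1 hum).elim
        · exact (hdisj um h.1 hum).elim
        · obtain ⟨ρ', _, hρ'1, heq⟩ := h.1
          have : ρ = ρ' := (Prod.ext_iff.mp heq).1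
          linarith
        · rw [h.2.2]; ring
      · intro h
        right
        refine ⟨⟨ρ, hρ1, hρ2, rfl⟩, hum, ?_⟩
        rcases mul_eq_zero.mp h with h' | h'
        · rcases mul_eq_zero.mp h' with h'' | h''
          · exact absurd h'' (ne_of_gt humρ)
          · exact absurd h'' (ne_of_gt hρpos)
        · linarith [h']
end

section
/- Let N ≥ 1, let u₀, u₁, …, u_N ∈ ℝ² be states, let T, Λ ∈ ℝ with Λ ≥ 0, let x₁ < x₂ < … < x_N be reals, and let σ₁, …, σ_N be speeds with |σᵢ| ≤ Λ for every i. For τ ∈ ℝ define the fronts sᵢ(τ) := xᵢ + σᵢ·(τ − T), and for every τ such that s₁(τ) < s₂(τ) < … < s_N(τ), define the piecewise constant profile u(τ, x) := u₀ for x < s₁(τ), u(τ, x) := uᵢ for sᵢ(τ) ≤ x < s_{i+1}(τ) (1 ≤ i ≤ N−1), and u(τ, x) := u_N for x ≥ s_N(τ). Then for all times s ≤ t such that the fronts remain strictly ordered at every τ ∈ [s, t], one has ∫_ℝ ‖u(t, x) − u(s, x)‖ dx ≤ Λ · (∑_{i=1}^{N} ‖uᵢ − u_{i−1}‖) · (t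 − s), where ‖(a, b)‖ := |a| + |b|. -/
/-!
Write the profile at time `τ` as `u₀ + ∑ᵢ 𝟙[sᵢ(τ) ≤ x] (uᵢ - uᵢ₋₁)`. Between two times the
`i`-th jump term changes only on the interval swept by the `i`-th front, of length
`|σᵢ| (t - s) ≤ Λ (t - s)`, so the triangle inequality under the integral gives the bound.
Since `|a| + |b|` is the norm of `WithLp 1 (ℝ × ℝ)`, the estimate holds for profiles with
values in any seminormed group.
-/

open MeasureTheory Set

theorem Set.Ici_symmDiff_Ici {α : Type*} [LinearOrder α] (a b : α) :
    symmDiff (Ici a) (Ici b) = Ico (min a b) (max a b) := by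
  rw [symmDiff_def, Ici_sdiff_Ici, Ici_sdiff_Ici, max_comm]
  exact Ico_union_Ico' le_rfl le_rfl

section Jump

variable {α E : Type*} [LinearOrder α] [SeminormedAddCommGroup E]

theorem norm_indicator_Ici_sub_indicator_Ici (a b y : α) (c : E) :
    ‖(Ici a).indicator (fun _ => c) y - (Ici b).indicator (fun _ => c) y‖ =
      (Ico (min a b) (max a b)).indicator (fun _ => ‖c‖) y := by
  rw [← apply_indicator_symmDiff norm_neg, Ici_symmDiff_Ici, norm_indicator_eq_indicator_norm]

theorem integrable_norm_indicator_Ici_sub_indicator_Ici (a b : ℝ) (c : E) :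
    Integrable fun y => ‖(Ici a).indicator (fun _ => c) y - (Ici b).indicator (fun _ => c) y‖ := by
  simp_rw [norm_indicator_Ici_sub_indicator_Ici]
  exact (integrableOn_const measure_Ico_lt_top.ne).integrable_indicator measurableSet_Ico

theorem integral_norm_indicator_Ici_sub_indicator_Ici (a b : ℝ) (c : E) :
    ∫ y, ‖(Ici a).indicator (fun _ => c) y - (Ici b).indicator (fun _ => c) y‖ = |a - b| * ‖c‖ := by
  simp_rw [norm_indicator_Ici_sub_indicator_Ici]
  rw [integral_indicator_const _ measurableSet_Ico, Real.volume_real_Ico, max_sub_min_eq_abs',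
    max_eq_left (abs_nonneg _), smul_eq_mul]

end Jump

theorem MonotoneOn.exists_forall_le_iff_le {α : Type*} [Preorder α] {a : ℕ → α} {N : ℕ}
    (ha : MonotoneOn a (Icc 1 N)) (y : α) :
    ∃ k ≤ N, ∀ i, 1 ≤ i → i ≤ N → (a i ≤ y ↔ i ≤ k) := by
  classical
  refine ⟨Nat.findGreatest (fun i => a i ≤ y) N, Nat.findGreatest_le N, fun i h1 hN =>
    ⟨Nat.le_findGreatest (P := fun i => a i ≤ y) hN, fun hik => ?_⟩⟩
  have hk : 1 ≤ Nat.findGreatest (fun i => a i ≤ y) N := h1.trans hik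
  exact (ha ⟨h1, hN⟩ ⟨hk, Nat.findGreatest_le N⟩ hik).trans
    (Nat.findGreatest_of_ne_zero rfl (Nat.one_le_iff_ne_zero.1 hk))

section FrontProfile

variable {M : Type*} [AddCommGroup M]

/-- The profile with value `u i` between the fronts `a i` and `a (i + 1)`, written as `u 0`
plus the jumps already crossed. -/
noncomputable def frontProfile (N : ℕ) (u : ℕ → M) (a : ℕ → ℝ) (y : ℝ) : M :=
  u 0 + ∑ i ∈ Finset.Icc 1 N, (Ici (a i)).indicator (fun _ => u i - u (i - 1)) y

theorem Finset.sum_Icc_one_sub_pred (f : ℕ → M) (k : ℕ) :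
    ∑ i ∈ Finset.Icc 1 k, (f i - f (i - 1)) = f k - f 0 := by
  induction k with
  | zero => simp
  | succ k ih =>
    rw [Finset.sum_Icc_succ_top (Nat.le_add_left 1 k), ih, Nat.add_sub_cancel]
    abel

theorem frontProfile_eq_of_forall_le_iff {N k : ℕ} (hkN : k ≤ N) (u : ℕ → M) {a : ℕ → ℝ}
    {y : ℝ} (hk : ∀ i, 1 ≤ i → i ≤ N → (a i ≤ y ↔ i ≤ k)) : frontProfile N u a y = u k := by
  have crossed : {i ∈ Finset.Icc 1 N | a i ≤ y} = Finset.Icc 1 k := by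
    ext i
    simp only [Finset.mem_filter, Finset.mem_Icc]
    constructor
    · rintro ⟨⟨h1, hN⟩, hy⟩
      exact ⟨h1, (hk i h1 hN).1 hy⟩
    · rintro ⟨h1, hik⟩
      exact ⟨⟨h1, hik.trans hkN⟩, (hk i h1 (hik.trans hkN)).2 hik⟩
  simp only [frontProfile, indicator_apply, mem_Ici]
  rw [← Finset.sum_filter, crossed, Finset.sum_Icc_one_sub_pred]
  abel

theorem eq_frontProfile {N : ℕ} (hN : 1 ≤ N) {u : ℕ → M} {a : ℕ → ℝ}
    (ha : ∀ i, 1 ≤ i → i < N → a i < a (i + 1)) {y : ℝ} {v : M}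
    (h_left : y < a 1 → v = u 0)
    (h_mid : ∀ i, 1 ≤ i → i < N → a i ≤ y → y < a (i + 1) → v = u i)
    (h_right : a N ≤ y → v = u N) : v = frontProfile N u a y := by
  have mono : MonotoneOn a (Icc 1 N) :=
    (strictMonoOn_of_lt_succ ordConnected_Icc fun i _ hi hi' =>
      ha i hi.1 (Order.succ_le_iff.1 hi'.2)).monotoneOn
  obtain ⟨k, hkN, hk⟩ := mono.exists_forall_le_iff_le y
  rw [frontProfile_eq_of_forall_le_iff hkN u hk]
  obtain rfl | hk0 := Nat.eq_zero_or_pos k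
  · exact h_left (not_le.1 fun h => by simpa using (hk 1 le_rfl hN).1 h)
  obtain rfl | hkN' := hkN.eq_or_lt
  · exact h_right ((hk _ hN le_rfl).2 le_rfl)
  exact h_mid k hk0 hkN' ((hk k hk0 hkN).2 le_rfl)
    (not_le.1 fun h => by simpa using (hk (k + 1) (by omega) hkN').1 h)

end FrontProfile

section Normed

variable {E : Type*} [SeminormedAddCommGroup E]

theorem norm_frontProfile_sub_le (N : ℕ) (u : ℕ → E) (a b : ℕ → ℝ) (y : ℝ) :
    ‖frontProfile N u a y - frontProfile N u b y‖ ≤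
      ∑ i ∈ Finset.Icc 1 N, ‖(Ici (a i)).indicator (fun _ => u i - u (i - 1)) y -
        (Ici (b i)).indicator (fun _ => u i - u (i - 1)) y‖ := by
  rw [frontProfile, frontProfile, add_sub_add_left_eq_sub, ← Finset.sum_sub_distrib]
  exact norm_sum_le _ _

theorem integral_norm_frontProfile_sub_le (N : ℕ) (u : ℕ → E) (a b : ℕ → ℝ) :
    ∫ y, ‖frontProfile N u a y - frontProfile N u b y‖ ≤
      ∑ i ∈ Finset.Icc 1 N, |a i - b i| * ‖u i - u (i - 1)‖ := by
  simp_rw [← integral_norm_indicator_Ici_sub_indicator_Ici]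
  rw [← integral_finsetSum _ fun i _ => integrable_norm_indicator_Ici_sub_indicator_Ici _ _ _]
  exact integral_mono_of_nonneg (.of_forall fun y => norm_nonneg _)
    (integrable_finsetSum _ fun i _ => integrable_norm_indicator_Ici_sub_indicator_Ici _ _ _)
    (.of_forall (norm_frontProfile_sub_le N u a b))

end Normed

theorem wavefront_L1_lipschitz_general
    (N : ℕ) (hN : 1 ≤ N) (u : ℕ → ℝ × ℝ) (T Λ : ℝ)
    (x σ : ℕ → ℝ)
    (hσ : ∀ i, 1 ≤ i → i ≤ N → |σ i| ≤ Λ)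
    (s : ℕ → ℝ → ℝ) (hs : ∀ i τ, s i τ = x i + σ i * (τ - T))
    (U : ℝ → ℝ → ℝ × ℝ)
    (hU : ∀ τ : ℝ, (∀ i, 1 ≤ i → i < N → s i τ < s (i + 1) τ) →
      ∀ y : ℝ,
        (y < s 1 τ → U τ y = u 0) ∧
        (∀ i, 1 ≤ i → i < N → s i τ ≤ y → y < s (i + 1) τ → U τ y = u i) ∧
        (s N τ ≤ y → U τ y = u N)) :
    ∀ t₁ t₂ : ℝ, t₁ ≤ t₂ →
      (∀ τ ∈ Set.Icc t₁ t₂, ∀ i, 1 ≤ i → i < N → s i τ < s (i + 1) τ) →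
      (∫ y : ℝ, (|(U t₂ y).1 - (U t₁ y).1| + |(U t₂ y).2 - (U t₁ y).2|)) ≤
        Λ * (∑ i ∈ Finset.Icc 1 N,
              (|(u i).1 - (u (i - 1)).1| + |(u i).2 - (u (i - 1)).2|)) * (t₂ - t₁) := by
  intro t₁ t₂ ht hord
  have l1_norm (p q : ℝ × ℝ) :
      |p.1 - q.1| + |p.2 - q.2| = ‖WithLp.toLp 1 p - WithLp.toLp 1 q‖ := by
    simp [WithLp.prod_norm_eq_of_L1, Real.norm_eq_abs]
  have profile : ∀ τ ∈ Icc t₁ t₂, ∀ y,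
      WithLp.toLp 1 (U τ y) = frontProfile N (fun i => WithLp.toLp 1 (u i)) (s · τ) y := by
    intro τ hτ y
    obtain ⟨h_left, h_mid, h_right⟩ := hU τ (hord τ hτ) y
    exact eq_frontProfile hN (hord τ hτ) (fun h => congrArg _ (h_left h))
      (fun i h1 hi ha hb => congrArg _ (h_mid i h1 hi ha hb)) (fun h => congrArg _ (h_right h))
  have front_shift (i : ℕ) : |s i t₂ - s i t₁| = |σ i| * (t₂ - t₁) := by
    rw [hs, hs, ← abs_of_nonneg (sub_nonneg.2 ht), ← abs_mul]
    ring_nf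
  simp_rw [l1_norm, profile t₂ ⟨ht, le_rfl⟩, profile t₁ ⟨le_rfl, ht⟩, Finset.mul_sum,
    Finset.sum_mul]
  refine (integral_norm_frontProfile_sub_le N _ _ _).trans (Finset.sum_le_sum fun i hi => ?_)
  rw [Finset.mem_Icc] at hi
  rw [front_shift, mul_right_comm Λ]
  gcongr
  exact hσ i hi.1 hi.2

/-- L¹-Lipschitz-in-time estimate for a piecewise constant wave-front
tracking profile: if the `N` fronts `sᵢ(τ) = xᵢ + σᵢ(τ − T)` have speeds bounded by `Λ`
and remain strictly ordered on `[s, t]`, then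
`∫ ‖u(t,·) − u(s,·)‖ ≤ Λ · (∑ᵢ ‖uᵢ − uᵢ₋₁‖) · (t − s)`, where `‖(a,b)‖ = |a| + |b|`. -/
theorem wavefront_L1_lipschitz
    (N : ℕ) (hN : 1 ≤ N) (u : ℕ → ℝ × ℝ) (T Λ : ℝ) (hΛ : 0 ≤ Λ)
    (x σ : ℕ → ℝ)
    (hx : ∀ i, 1 ≤ i → i < N → x i < x (i + 1))
    (hσ : ∀ i, 1 ≤ i → i ≤ N → |σ i| ≤ Λ)
    (s : ℕ → ℝ → ℝ) (hs : ∀ i τ, s i τ = x i + σ i * (τ - T))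
    (U : ℝ → ℝ → ℝ × ℝ)
    (hU : ∀ τ : ℝ, (∀ i, 1 ≤ i → i < N → s i τ < s (i + 1) τ) →
      ∀ y : ℝ,
        (y < s 1 τ → U τ y = u 0) ∧
        (∀ i, 1 ≤ i → i < N → s i τ ≤ y → y < s (i + 1) τ → U τ y = u i) ∧
        (s N τ ≤ y → U τ y = u N)) :
    ∀ t₁ t₂ : ℝ, t₁ ≤ t₂ →
      (∀ τ ∈ Set.Icc t₁ t₂, ∀ i, 1 ≤ i → i < N → s i τ < s (i + 1) τ) →
      (∫ y : ℝ, (|(U t₂ y).1 - (U t₁ y).1| + |(U t₂ y).2 - (U t₁ y).2|)) ≤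
        Λ * (∑ i ∈ Finset.Icc 1 N,
              (|(u i).1 - (u (i - 1)).1| + |(u i).2 - (u (i - 1)).2|)) * (t₂ - t₁) :=
  wavefront_L1_lipschitz_general N hN u T Λ x σ hσ s hs U hU
end
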